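/- Let Λ = (Λ_i)_{i∈ℤ} and Θ = (Θ_i)_{i∈ℤ} be dual g-frames for H with respect to K, and suppose Λ is represented by an invertible bounded operator T with bounded inverse (Λ_i = Λ_0 ∘ T^i for all i ∈ ℤ) and Θ is represented by an invertible bounded operator S with bounded inverse (Θ_i = Θ_0 ∘ S^i for all i ∈ ℤ). Then S = (T*)⁻¹. -/

import Mathlib

/-!
Reindexing the reconstruction formula `f = ∑ Λᵢ* Θᵢ f` by `i ↦ i + 1` and using
`Λᵢ₊₁ = Λᵢ T`, `Θᵢ₊₁ = Θᵢ S` gives `f = T* (∑ Λᵢ* Θᵢ (S f)) = T* S f`. Hence `T* S = 1`,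
and since `T*` is invertible with inverse `(T⁻¹)*`, `S = (T⁻¹)*`.
-/

open ContinuousLinearMap

section Shift

variable {R M N : Type*} [Semiring R] [TopologicalSpace M] [AddCommMonoid M] [Module R M]
  [TopologicalSpace N] [AddCommMonoid N] [Module R N]

theorem succ_eq_comp_of_eq_comp_zpow (Λ : ℤ → M →L[R] N) (T : M ≃L[R] M)
    (hrep : ∀ i : ℤ, Λ i = (Λ 0).comp ((T ^ i : M ≃L[R] M) : M →L[R] M)) (i : ℤ) :
    Λ (i + 1) = (Λ i).comp (T : M →L[R] M) := by
  rw [hrep (i + 1), hrep i, zpow_add_one]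
  rfl

end Shift

section Adjoint

variable {𝕜 E F : Type*} [RCLike 𝕜]
  [NormedAddCommGroup E] [InnerProductSpace 𝕜 E] [CompleteSpace E]
  [NormedAddCommGroup F] [InnerProductSpace 𝕜 F] [CompleteSpace F]

namespace ContinuousLinearEquiv

theorem adjoint_symm_comp_adjoint (e : E ≃L[𝕜] F) :
    adjoint (e.symm : F →L[𝕜] E) ∘L adjoint (e : E →L[𝕜] F) = ContinuousLinearMap.id 𝕜 F := by
  rw [← adjoint_comp, e.coe_comp_coe_symm, adjoint_id]

theorem adjoint_comp_adjoint_symm (e : E ≃L[𝕜] F) :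
    adjoint (e : E →L[𝕜] F) ∘L adjoint (e.symm : F →L[𝕜] E) = ContinuousLinearMap.id 𝕜 E := by
  rw [← adjoint_comp, e.coe_symm_comp_coe, adjoint_id]

noncomputable def adjoint (e : E ≃L[𝕜] F) : F ≃L[𝕜] E :=
  equivOfInverse' (ContinuousLinearMap.adjoint (e : E →L[𝕜] F))
    (ContinuousLinearMap.adjoint (e.symm : F →L[𝕜] E))
    e.adjoint_comp_adjoint_symm e.adjoint_symm_comp_adjoint

end ContinuousLinearEquiv

theorem adjoint_apply_eq_self_of_dual_of_shift (Λ Θ : ℤ → E →L[𝕜] F) (T : E ≃L[𝕜] E)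
    (S : E →L[𝕜] E) (hdual : ∀ f : E, ∑' i : ℤ, adjoint (Λ i) (Θ i f) = f)
    (hΛ : ∀ i : ℤ, Λ (i + 1) = (Λ i).comp (T : E →L[𝕜] E))
    (hΘ : ∀ i : ℤ, Θ (i + 1) = (Θ i).comp S) (f : E) :
    adjoint (T : E →L[𝕜] E) (S f) = f :=
  calc adjoint (T : E →L[𝕜] E) (S f)
      = T.adjoint (∑' i : ℤ, adjoint (Λ i) (Θ i (S f))) := by rw [hdual]; rfl
    _ = ∑' i : ℤ, T.adjoint (adjoint (Λ i) (Θ i (S f))) := T.adjoint.map_tsum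
    _ = ∑' i : ℤ, adjoint (Λ (i + 1)) (Θ (i + 1) f) := tsum_congr fun i => by
        rw [hΛ, hΘ, adjoint_comp]; rfl
    _ = ∑' i : ℤ, adjoint (Λ i) (Θ i f) :=
        (Equiv.addRight (1 : ℤ)).tsum_eq fun i => adjoint (Λ i) (Θ i f)
    _ = f := hdual f

end Adjoint

theorem dual_gframes_Z_representation_relation_general
    {H K : Type*} [NormedAddCommGroup H] [InnerProductSpace ℂ H] [CompleteSpace H]
    [NormedAddCommGroup K] [InnerProductSpace ℂ K] [CompleteSpace K]
    (Λ Θ : ℤ → (H →L[ℂ] K))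
    (hdual : ∀ f : H, (∑' i : ℤ, ContinuousLinearMap.adjoint (Λ i) (Θ i f)) = f)
    (T S : H ≃L[ℂ] H)
    (hrepΛ : ∀ i : ℤ, Λ i = (Λ 0).comp ((T ^ i : H ≃L[ℂ] H) : H →L[ℂ] H))
    (hrepΘ : ∀ i : ℤ, Θ i = (Θ 0).comp ((S ^ i : H ≃L[ℂ] H) : H →L[ℂ] H)) :
    (S : H →L[ℂ] H) = ContinuousLinearMap.adjoint (T.symm : H →L[ℂ] H) := by
  have hTS := adjoint_apply_eq_self_of_dual_of_shift Λ Θ T S hdual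
    (succ_eq_comp_of_eq_comp_zpow Λ T hrepΛ) (succ_eq_comp_of_eq_comp_zpow Θ S hrepΘ)
  ext f
  exact T.adjoint.eq_symm_apply.mpr (hTS f)

/-- If `Λ = (Λ_0 ∘ T^i)_{i∈ℤ}` and `Θ = (Θ_0 ∘ S^i)_{i∈ℤ}` are dual g-frames with
`T, S ∈ GL(H)`, then `S = (T*)⁻¹ = (T⁻¹)*`. -/
theorem dual_gframes_Z_representation_relation
    {H K : Type*} [NormedAddCommGroup H] [InnerProductSpace ℂ H] [CompleteSpace H]
    [TopologicalSpace.SeparableSpace H]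
    [NormedAddCommGroup K] [InnerProductSpace ℂ K] [CompleteSpace K]
    [TopologicalSpace.SeparableSpace K]
    (Λ Θ : ℤ → (H →L[ℂ] K)) (A B A' B' : ℝ) (hA : 0 < A) (hAB : A ≤ B)
    (hA' : 0 < A') (hAB' : A' ≤ B')
    (hsumΛ : ∀ f : H, Summable fun i : ℤ => ‖Λ i f‖ ^ 2)
    (hlowΛ : ∀ f : H, A * ‖f‖ ^ 2 ≤ ∑' i : ℤ, ‖Λ i f‖ ^ 2)
    (hupΛ : ∀ f : H, ∑' i : ℤ, ‖Λ i f‖ ^ 2 ≤ B * ‖f‖ ^ 2)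
    (hsumΘ : ∀ f : H, Summable fun i : ℤ => ‖Θ i f‖ ^ 2)
    (hlowΘ : ∀ f : H, A' * ‖f‖ ^ 2 ≤ ∑' i : ℤ, ‖Θ i f‖ ^ 2)
    (hupΘ : ∀ f : H, ∑' i : ℤ, ‖Θ i f‖ ^ 2 ≤ B' * ‖f‖ ^ 2)
    (hdual : ∀ f : H, (∑' i : ℤ, ContinuousLinearMap.adjoint (Λ i) (Θ i f)) = f)
    (T S : H ≃L[ℂ] H)
    (hrepΛ : ∀ i : ℤ, Λ i = (Λ 0).comp ((T ^ i : H ≃L[ℂ] H) : H →L[ℂ] H))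
    (hrepΘ : ∀ i : ℤ, Θ i = (Θ 0).comp ((S ^ i : H ≃L[ℂ] H) : H →L[ℂ] H)) :
    (S : H →L[ℂ] H) = ContinuousLinearMap.adjoint (T.symm : H →L[ℂ] H) :=
  dual_gframes_Z_representation_relation_general Λ Θ hdual T S hrepΛ hrepΘ
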